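/- arXiv:0910.5098 — 2 statements merged into one kernel-verified Lean document; each statement's English description precedes it below -/
import Mathlib

section
/- Let n be a positive integer, A₋₁ an n×n complex matrix, A₂, A₃ : [-1,0] → ℂ^{n×n} matrix-valued functions with square-integrable entries, and Δ(λ) the characteristic matrix function. Then there exists ω ∈ ℝ such that every λ ∈ ℂ with det Δ(λ) = 0 satisfies Re λ ≤ ω. In particular, det Δ is not identically zero. -/
open MeasureTheory Complex Set

/-- The characteristic matrix function `Δ(λ)` of the neutral type system. -/
noncomputable def Delta {n : ℕ} (Am1 : Matrix (Fin n) (Fin n) ℂ)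
    (A2 A3 : ℝ → Matrix (Fin n) (Fin n) ℂ) (lam : ℂ) : Matrix (Fin n) (Fin n) ℂ :=
  (-lam) • (1 : Matrix (Fin n) (Fin n) ℂ)
    + (lam * Complex.exp (-lam)) • Am1
    + lam • Matrix.of (fun i j => ∫ s in Set.Ioc (-1:ℝ) 0, Complex.exp (lam * s) * A2 s i j)
    + Matrix.of (fun i j => ∫ s in Set.Ioc (-1:ℝ) 0, Complex.exp (lam * s) * A3 s i j)

/-!
As `Re λ → ∞`, uniformly in `Im λ`, the matrix `-λ⁻¹ Δ(λ) = I - e^{-λ} A₋₁ - ∫ e^{λs} A₂(s) ds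
- λ⁻¹ ∫ e^{λs} A₃(s) ds` tends to the identity: `e^{-λ} → 0`, `λ⁻¹ → 0`, and the finite Laplace
transforms of the (square-, hence absolutely) integrable kernels tend to `0` by dominated
convergence, since `|e^{λs}| = e^{s Re λ} ≤ 1` for `s ≤ 0`. By continuity of the determinant,
`det Δ(λ) = (-λ)ⁿ det(-λ⁻¹ Δ(λ))` does not vanish on some right half-plane `Re λ ≥ ω`.
-/

open Filter Topology

theorem Complex.tendsto_inv_comap_re_atTop : Tendsto (fun z : ℂ => z⁻¹) (comap re atTop) (𝓝 0) :=
  tendsto_inv₀_cobounded.comp <| tendsto_norm_atTop_iff_cobounded.1 <|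
    tendsto_atTop_mono re_le_norm tendsto_comap

theorem Complex.tendsto_exp_neg_comap_re_atTop :
    Tendsto (fun z : ℂ => exp (-z)) (comap re atTop) (𝓝 0) :=
  tendsto_exp_comap_re_atBot.comp <| tendsto_comap_iff.2 <| by
    simpa [Function.comp_def] using
      tendsto_neg_atTop_atBot.comp (tendsto_comap : Tendsto re (comap re atTop) atTop)

theorem tendsto_setIntegral_exp_mul_comap_re_atTop {S : Set ℝ} (hS : MeasurableSet S)
    (hS_nonpos : S ⊆ Iic 0) {g : ℝ → ℂ} (hg : IntegrableOn g S) :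
    Tendsto (fun z : ℂ => ∫ s in S, exp (z * s) * g s) (comap re atTop) (𝓝 0) := by
  have hneg : ∀ᵐ s ∂volume.restrict S, s < 0 := by
    filter_upwards [ae_restrict_mem hS, ae_restrict_of_ae (Measure.ae_ne volume 0)] with s hs h0
    exact (hS_nonpos hs).lt_of_ne h0
  have hlim (s : ℝ) (hs : s < 0) :
      Tendsto (fun z : ℂ => exp (z * s) * g s) (comap re atTop) (𝓝 0) := by
    have hre : Tendsto (fun z : ℂ => re (z * s)) (comap re atTop) atBot := by
      simpa only [re_mul_ofReal] using tendsto_comap.atTop_mul_const_of_neg hs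
    simpa using (tendsto_exp_comap_re_atBot.comp (tendsto_comap_iff.2 hre)).mul_const (g s)
  have hbound : ∀ᶠ z in comap re atTop,
      ∀ᵐ s : ℝ ∂volume.restrict S, ‖exp (z * s) * g s‖ ≤ ‖g s‖ := by
    filter_upwards [tendsto_comap.eventually_ge_atTop 0] with z hz
    filter_upwards [hneg] with s hs
    rw [norm_mul, norm_exp, re_mul_ofReal]
    exact mul_le_of_le_one_left (norm_nonneg _)
      (Real.exp_le_one_iff.2 (mul_nonpos_of_nonneg_of_nonpos hz hs.le))
  have hmeas (z : ℂ) : AEStronglyMeasurable (fun s : ℝ => exp (z * s) * g s) (volume.restrict S) :=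
    (continuous_exp.comp (continuous_const.mul continuous_ofReal)).aestronglyMeasurable.mul
      hg.aestronglyMeasurable
  simpa using tendsto_integral_filter_of_dominated_convergence (fun s => ‖g s‖)
    (Eventually.of_forall hmeas) hbound hg.norm (hneg.mono hlim)

noncomputable def finiteLaplace {m : Type*} (A : ℝ → Matrix m m ℂ) (z : ℂ) : Matrix m m ℂ :=
  Matrix.of fun i j => ∫ s in Ioc (-1:ℝ) 0, exp (z * s) * A s i j

theorem tendsto_finiteLaplace_comap_re_atTop {m : Type*} {A : ℝ → Matrix m m ℂ}
    (hA : ∀ i j, IntegrableOn (fun s => A s i j) (Ioc (-1) 0)) :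
    Tendsto (finiteLaplace A) (comap re atTop) (𝓝 0) :=
  tendsto_pi_nhds.2 fun i => tendsto_pi_nhds.2 fun j =>
    tendsto_setIntegral_exp_mul_comap_re_atTop measurableSet_Ioc Ioc_subset_Iic_self (hA i j)

theorem Delta_eq_neg_smul {n : ℕ} (Am1 : Matrix (Fin n) (Fin n) ℂ)
    (A2 A3 : ℝ → Matrix (Fin n) (Fin n) ℂ) {z : ℂ} (hz : z ≠ 0) :
    Delta Am1 A2 A3 z =
      (-z) • (1 - exp (-z) • Am1 - finiteLaplace A2 z - z⁻¹ • finiteLaplace A3 z) := by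
  rw [Delta, finiteLaplace, finiteLaplace, smul_sub, smul_sub, smul_sub, smul_smul, smul_smul,
    neg_mul, neg_mul, mul_inv_cancel₀ hz]
  simp only [neg_smul, sub_neg_eq_add, one_smul, mul_comm]

theorem eventually_det_Delta_ne_zero {n : ℕ} (Am1 : Matrix (Fin n) (Fin n) ℂ)
    {A2 A3 : ℝ → Matrix (Fin n) (Fin n) ℂ}
    (hA2 : ∀ i j, IntegrableOn (fun s => A2 s i j) (Ioc (-1) 0))
    (hA3 : ∀ i j, IntegrableOn (fun s => A3 s i j) (Ioc (-1) 0)) :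
    ∀ᶠ z in comap re atTop, (Delta Am1 A2 A3 z).det ≠ 0 := by
  have hlim : Tendsto (fun z => 1 - exp (-z) • Am1 - finiteLaplace A2 z - z⁻¹ • finiteLaplace A3 z)
      (comap re atTop) (𝓝 1) := by
    simpa using ((tendsto_const_nhds.sub (tendsto_exp_neg_comap_re_atTop.smul_const Am1)).sub
      (tendsto_finiteLaplace_comap_re_atTop hA2)).sub
      (tendsto_inv_comap_re_atTop.smul (tendsto_finiteLaplace_comap_re_atTop hA3))
  have hdet := ((continuous_id.matrix_det.tendsto 1).comp hlim).eventually_ne (b₂ := 0) (by simp)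
  filter_upwards [hdet, tendsto_comap.eventually_gt_atTop 0] with z hdet hz
  have hz0 : z ≠ 0 := by rintro rfl; simp at hz
  rw [Delta_eq_neg_smul Am1 A2 A3 hz0, Matrix.det_smul]
  exact mul_ne_zero (pow_ne_zero _ (neg_ne_zero.2 hz0)) hdet

theorem spectrum_in_left_half_plane_general
    (n : ℕ) (Am1 : Matrix (Fin n) (Fin n) ℂ)
    (A2 A3 : ℝ → Matrix (Fin n) (Fin n) ℂ)
    (hA2 : ∀ i j, MeasureTheory.MemLp (fun θ => A2 θ i j) 2
      (volume.restrict (Set.Ioc (-1:ℝ) 0)))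
    (hA3 : ∀ i j, MeasureTheory.MemLp (fun θ => A3 θ i j) 2
      (volume.restrict (Set.Ioc (-1:ℝ) 0))) :
    (∃ ω : ℝ, ∀ lam : ℂ, (Delta Am1 A2 A3 lam).det = 0 → lam.re ≤ ω) ∧
      ∃ lam : ℂ, (Delta Am1 A2 A3 lam).det ≠ 0 := by
  obtain ⟨ω, hω⟩ := eventually_atTop.1 <| eventually_comap.1 <|
    eventually_det_Delta_ne_zero Am1 (fun i j => (hA2 i j).integrable one_le_two)
      (fun i j => (hA3 i j).integrable one_le_two)
  exact ⟨⟨ω, fun z hz => not_lt.1 fun hlt => hω _ hlt.le z rfl hz⟩, ω, hω ω le_rfl _ (ofReal_re ω)⟩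

theorem spectrum_in_left_half_plane
    (n : ℕ) (hn : 0 < n) (Am1 : Matrix (Fin n) (Fin n) ℂ)
    (A2 A3 : ℝ → Matrix (Fin n) (Fin n) ℂ)
    (hA2 : ∀ i j, MeasureTheory.MemLp (fun θ => A2 θ i j) 2
      (volume.restrict (Set.Ioc (-1:ℝ) 0)))
    (hA3 : ∀ i j, MeasureTheory.MemLp (fun θ => A3 θ i j) 2
      (volume.restrict (Set.Ioc (-1:ℝ) 0))) :
    (∃ ω : ℝ, ∀ lam : ℂ, (Delta Am1 A2 A3 lam).det = 0 → lam.re ≤ ω) ∧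
      ∃ lam : ℂ, (Delta Am1 A2 A3 lam).det ≠ 0 :=
  spectrum_in_left_half_plane_general n Am1 A2 A3 hA2 hA3
end

section
/- Let n be a positive integer, A₋₁ an invertible n×n complex matrix, A₂, A₃ : [-1,0] → ℂ^{n×n} matrix-valued functions with square-integrable entries, and Δ(λ) the characteristic matrix function. Let c ∈ ℝ satisfy c > ln|μ| for every eigenvalue μ of A₋₁. Then the set of zeros of det Δ in the half-plane {λ ∈ ℂ : Re λ ≥ c} is finite. -/
/-!
Away from `z = 0` one has `Δ(z) = -z • M(z)` with `M(z) = 1 - e^{-z} A₋₁ - L₂(z) - z⁻¹ L₃(z)`,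
where `Lₖ(z) = ∫_{(-1,0]} e^{zs} Aₖ(s) ds`. As `|z| → ∞` with `Re z ≥ c`, the integrals `Lₖ(z)`
tend to `0`: by dominated convergence where `Re z → ∞`, by the Riemann–Lebesgue lemma where
`Re z` stays bounded. Along a sequence on which `e^{-z}` converges to some `w`, necessarily
`|w| ≤ e^{-c}`, so `M(z)` tends to `1 - w A₋₁`, which is invertible because `1/w` is not an
eigenvalue of `A₋₁`. Hence the zeros of `det Δ` in the half-plane stay in a compact set, and
`det Δ` is entire and not identically zero, so there are only finitely many of them.
-/

open MeasureTheory Complex Set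

open Filter Topology

local notation "μI" => volume.restrict (Ioc (-1 : ℝ) 0)

lemma mul_le_max_zero_neg_of_mem_Ioc {c t s : ℝ} (hc : c ≤ t) (hs : s ∈ Ioc (-1 : ℝ) 0) :
    t * s ≤ max 0 (-c) := by
  rcases le_total 0 t with ht | ht
  · exact le_max_of_le_left (mul_nonpos_of_nonneg_of_nonpos ht hs.2)
  · exact le_max_of_le_right (by nlinarith [hs.1])

lemma norm_cexp_mul_ofReal (z : ℂ) (s : ℝ) : ‖cexp (z * s)‖ = Real.exp (z.re * s) := by
  rw [norm_exp, re_mul_ofReal]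

lemma norm_cexp_mul_sub_cexp_mul {z w : ℂ} (h : z.im = w.im) (s : ℝ) :
    ‖cexp (z * s) - cexp (w * s)‖ = |Real.exp (z.re * s) - Real.exp (w.re * s)| := by
  rw [exp_eq_exp_re_mul_sin_add_cos (z * s), exp_eq_exp_re_mul_sin_add_cos (w * s),
    re_mul_ofReal, re_mul_ofReal, im_mul_ofReal, im_mul_ofReal, h, ← sub_mul, norm_mul,
    norm_cos_add_sin_mul_I, mul_one, ← ofReal_exp, ← ofReal_exp, ← ofReal_sub, norm_real,
    Real.norm_eq_abs]

lemma Complex.tendsto_im_cocompact_of_tendsto_re {α : Type*} {l : Filter α} {u : α → ℂ} {x : ℝ}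
    (hu : Tendsto u l (cocompact ℂ)) (hre : Tendsto (fun a => (u a).re) l (𝓝 x)) :
    Tendsto (fun a => (u a).im) l (cocompact ℝ) := by
  rw [← Metric.cobounded_eq_cocompact, ← tendsto_norm_atTop_iff_cobounded] at hu ⊢
  refine tendsto_atTop_mono (fun a => ?_) (hu.atTop_add hre.norm.neg)
  have := norm_le_abs_re_add_abs_im (u a)
  simp only [Real.norm_eq_abs]
  linarith

instance isCountablyGenerated_cocompact_of_proper {E : Type*} [NormedAddCommGroup E]
    [ProperSpace E] : (cocompact E).IsCountablyGenerated := by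
  rw [← Metric.cobounded_eq_cocompact, ← comap_norm_atTop]
  infer_instance

lemma Differentiable.matrix_det {𝕜 ι : Type*} [NontriviallyNormedField 𝕜] [Fintype ι]
    [DecidableEq ι] {M : 𝕜 → Matrix ι ι 𝕜}
    (hM : ∀ i j, Differentiable 𝕜 fun x => M x i j) : Differentiable 𝕜 fun x => (M x).det := by
  simp_rw [Matrix.det_apply']
  exact Differentiable.fun_sum fun σ _ =>
    (Differentiable.fun_finsetProd fun i _ => hM _ _).const_mul _

lemma Differentiable.finite_setOf_mem_and_eq_zero {f : ℂ → ℂ} (hf : Differentiable ℂ f)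
    {z₀ : ℂ} (hz₀ : f z₀ ≠ 0) {K : Set ℂ} (hK : IsCompact K) : {z ∈ K | f z = 0}.Finite := by
  have hne : ∀ᶠ z in codiscreteWithin univ, f z ≠ 0 :=
    ((hf.differentiableOn.analyticOnNhd isOpen_univ).eqOn_zero_or_eventually_ne_zero_of_preconnected
      isPreconnected_univ).resolve_left fun h => hz₀ (h (mem_univ z₀))
  exact (hK.finite_sdiff_of_mem_codiscreteWithin (codiscreteWithin_mono (subset_univ K) hne)).subset
    fun z hz => ⟨hz.1, not_not.2 hz.2⟩

lemma det_one_sub_smul_ne_zero {n : ℕ} {A : Matrix (Fin n) (Fin n) ℂ} {c : ℝ}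
    (hc : ∀ μ ∈ spectrum ℂ A, Real.log ‖μ‖ < c) {w : ℂ} (hw : ‖w‖ ≤ Real.exp (-c)) :
    (1 - w • A).det ≠ 0 := by
  rcases eq_or_ne w 0 with rfl | hw0
  · simp
  intro hdet
  have hmem : w⁻¹ ∈ spectrum ℂ A := by
    rw [spectrum.mem_iff, Matrix.isUnit_iff_isUnit_det, Algebra.algebraMap_eq_smul_one,
      show w⁻¹ • (1 : Matrix (Fin n) (Fin n) ℂ) - A = w⁻¹ • (1 - w • A) by
        rw [smul_sub, smul_smul, inv_mul_cancel₀ hw0, one_smul],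
      Matrix.det_smul, hdet, mul_zero]
    exact not_isUnit_zero
  have hlog := hc _ hmem
  rw [norm_inv, Real.log_inv, neg_lt] at hlog
  exact hw.not_gt ((Real.lt_log_iff_exp_lt (norm_pos_iff.2 hw0)).1 hlog)

instance cocompact_inf_principal_le_re_neBot (c : ℝ) :
    (cocompact ℂ ⊓ 𝓟 {z : ℂ | c ≤ z.re}).NeBot :=
  (tendsto_inf.2 ⟨isometry_ofReal.isClosedEmbedding.tendsto_cocompact.mono_left atTop_le_cocompact,
    tendsto_principal.2 ((eventually_ge_atTop c).mono fun t ht => by simpa using ht)⟩).neBot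

noncomputable def laplaceIoc (g : ℝ → ℂ) (z : ℂ) : ℂ :=
  ∫ s in Ioc (-1 : ℝ) 0, cexp (z * s) * g s

section laplaceIoc

variable {g : ℝ → ℂ}

lemma ae_norm_cexp_mul_le {c : ℝ} {z : ℂ} (hc : c ≤ z.re) :
    ∀ᵐ (s : ℝ) ∂μI, ‖cexp (z * s) * g s‖ ≤ Real.exp (max 0 (-c)) * ‖g s‖ := by
  filter_upwards [ae_restrict_mem measurableSet_Ioc] with s hs
  rw [norm_mul, norm_cexp_mul_ofReal]
  gcongr
  exact mul_le_max_zero_neg_of_mem_Ioc hc hs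

lemma aestronglyMeasurable_cexp_mul {μ : Measure ℝ} (hg : AEStronglyMeasurable g μ) (z : ℂ) :
    AEStronglyMeasurable (fun s : ℝ => cexp (z * s) * g s) μ :=
  (by fun_prop : Continuous fun s : ℝ => cexp (z * s)).aestronglyMeasurable.mul hg

lemma integrable_cexp_mul (hg : Integrable g μI) (z : ℂ) :
    Integrable (fun s : ℝ => cexp (z * s) * g s) μI :=
  (hg.norm.const_mul _).mono' (aestronglyMeasurable_cexp_mul hg.1 z)
    (ae_norm_cexp_mul_le (le_refl z.re))

lemma differentiable_laplaceIoc (hg : Integrable g μI) : Differentiable ℂ (laplaceIoc g) := by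
  intro z₀
  have hre : ∀ z ∈ Metric.ball z₀ 1, z₀.re - 1 ≤ z.re := fun z hz => by
    have := (abs_re_le_norm (z - z₀)).trans_lt (mem_ball_iff_norm.1 hz)
    rw [sub_re] at this
    linarith [neg_abs_le (z.re - z₀.re)]
  have hbound : ∀ᵐ (s : ℝ) ∂μI, ∀ z ∈ Metric.ball z₀ 1,
      ‖cexp (z * s) * (s * g s)‖ ≤ Real.exp (max 0 (-(z₀.re - 1))) * ‖g s‖ := by
    filter_upwards [ae_restrict_mem measurableSet_Ioc] with s hs z hz
    have hs1 : ‖(s : ℂ)‖ ≤ 1 := by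
      rw [norm_real, Real.norm_eq_abs, abs_le]
      exact ⟨hs.1.le, hs.2.trans zero_le_one⟩
    rw [norm_mul, norm_mul, norm_cexp_mul_ofReal]
    gcongr
    · exact mul_le_max_zero_neg_of_mem_Ioc (hre z hz) hs
    · exact mul_le_of_le_one_left (norm_nonneg _) hs1
  refine (hasDerivAt_integral_of_dominated_loc_of_deriv_le
    (F' := fun z s => cexp (z * s) * (s * g s)) (Metric.ball_mem_nhds z₀ one_pos)
    (.of_forall (aestronglyMeasurable_cexp_mul hg.1)) (integrable_cexp_mul hg z₀)
    (aestronglyMeasurable_cexp_mul (continuous_ofReal.aestronglyMeasurable.mul hg.1) z₀)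
    hbound (hg.norm.const_mul _) (.of_forall fun s z _ => ?_)).2.differentiableAt
  simpa [mul_assoc] using ((hasDerivAt_mul_const (s : ℂ)).cexp (x := z)).mul_const (g s)

lemma tendsto_laplaceIoc_comap_re_atTop (hg : Integrable g μI) :
    Tendsto (laplaceIoc g) (comap re atTop) (𝓝 0) := by
  have hlim : ∀ᵐ (s : ℝ) ∂μI,
      Tendsto (fun z : ℂ => cexp (z * s) * g s) (comap re atTop) (𝓝 0) := by
    rw [Measure.restrict_congr_set Ioo_ae_eq_Ioc.symm]
    filter_upwards [ae_restrict_mem measurableSet_Ioo] with s hs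
    rw [tendsto_zero_iff_norm_tendsto_zero]
    simp_rw [norm_mul, norm_cexp_mul_ofReal]
    simpa using ((Real.tendsto_exp_atBot.comp
      (tendsto_comap.atTop_mul_const_of_neg hs.2)).mul_const ‖g s‖)
  have h := tendsto_integral_filter_of_dominated_convergence (f := 0) _
    (.of_forall (aestronglyMeasurable_cexp_mul hg.1))
    ((tendsto_comap.eventually_ge_atTop 0).mono fun z hz => ae_norm_cexp_mul_le hz)
    (hg.norm.const_mul _) hlim
  rwa [Pi.zero_def, integral_zero] at h

lemma tendsto_laplaceIoc_sub_laplaceIoc_comap_re_nhds (hg : Integrable g μI) (x : ℝ) :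
    Tendsto (fun z => laplaceIoc g z - laplaceIoc g (x + z.im * I)) (comap re (𝓝 x)) (𝓝 0) := by
  have hbound : ∀ᶠ z in comap re (𝓝 x), ∀ᵐ (s : ℝ) ∂μI,
      ‖cexp (z * s) * g s - cexp ((x + z.im * I) * s) * g s‖
        ≤ 2 * Real.exp (max 0 (-(x - 1))) * ‖g s‖ := by
    filter_upwards [tendsto_comap.eventually (eventually_ge_nhds (sub_one_lt x))] with z hz
    filter_upwards [ae_norm_cexp_mul_le (g := g) hz,
      ae_norm_cexp_mul_le (g := g) (c := x - 1) (z := x + z.im * I) (by simp)] with s h₁ h₂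
    linarith [norm_sub_le (cexp (z * s) * g s) (cexp ((x + z.im * I) * s) * g s)]
  have hlim : ∀ s : ℝ,
      Tendsto (fun z : ℂ => cexp (z * s) * g s - cexp ((x + z.im * I) * s) * g s)
        (comap re (𝓝 x)) (𝓝 0) := fun s => by
    have hnorm : ∀ z : ℂ, ‖cexp (z * s) * g s - cexp ((x + z.im * I) * s) * g s‖
        = |Real.exp (z.re * s) - Real.exp (x * s)| * ‖g s‖ := fun z => by
      rw [← sub_mul, norm_mul, norm_cexp_mul_sub_cexp_mul (by simp)]
      simp
    have hcont : Tendsto (fun t : ℝ => |Real.exp (t * s) - Real.exp (x * s)| * ‖g s‖)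
        (𝓝 x) (𝓝 0) := by
      simpa using (by fun_prop : Continuous fun t : ℝ =>
        |Real.exp (t * s) - Real.exp (x * s)| * ‖g s‖).tendsto x
    rw [tendsto_zero_iff_norm_tendsto_zero]
    simp_rw [hnorm]
    exact hcont.comp tendsto_comap
  have h := tendsto_integral_filter_of_dominated_convergence (f := 0) _
    (.of_forall fun z => (aestronglyMeasurable_cexp_mul hg.1 z).sub
      (aestronglyMeasurable_cexp_mul hg.1 _)) hbound (hg.norm.const_mul _) (.of_forall hlim)
  rw [Pi.zero_def, integral_zero] at h
  exact h.congr fun z => integral_sub (integrable_cexp_mul hg _) (integrable_cexp_mul hg _)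

open scoped FourierTransform in
lemma laplaceIoc_ofReal_add_mul_I (x y : ℝ) :
    laplaceIoc g (x + y * I) =
      𝓕 ((Ioc (-1 : ℝ) 0).indicator fun s => cexp (x * s) * g s) (-y / (2 * Real.pi)) := by
  rw [Real.fourier_real_eq_integral_exp_smul, laplaceIoc, ← integral_indicator measurableSet_Ioc]
  congr 1 with s
  by_cases hs : s ∈ Ioc (-1 : ℝ) 0
  · simp only [indicator_of_mem hs, smul_eq_mul, ← mul_assoc, ← Complex.exp_add]
    congr 2
    push_cast
    field_simp
    ring
  · simp [indicator_of_notMem hs]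

lemma tendsto_laplaceIoc_comap_re_nhds_inf_comap_im_cocompact (hg : Integrable g μI) (x : ℝ) :
    Tendsto (laplaceIoc g) (comap re (𝓝 x) ⊓ comap im (cocompact ℝ)) (𝓝 0) := by
  have hfreq : Tendsto (fun y : ℝ => -y / (2 * Real.pi)) (cocompact ℝ) (cocompact ℝ) :=
    ((Homeomorph.mulLeft₀ (-(2 * Real.pi)⁻¹) (by simp [Real.pi_ne_zero])).isClosedEmbedding
      |>.tendsto_cocompact).congr fun y => by simp [div_eq_inv_mul]
  have hfourier : Tendsto (fun z : ℂ => laplaceIoc g (x + z.im * I))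
      (comap im (cocompact ℝ)) (𝓝 0) := by
    simp_rw [laplaceIoc_ofReal_add_mul_I]
    exact (Real.zero_at_infty_fourier _).comp (hfreq.comp tendsto_comap)
  simpa using ((tendsto_laplaceIoc_sub_laplaceIoc_comap_re_nhds hg x).mono_left inf_le_left).add
    (hfourier.mono_left inf_le_right)

theorem tendsto_laplaceIoc_cocompact_inf_principal (hg : Integrable g μI) (c : ℝ) :
    Tendsto (laplaceIoc g) (cocompact ℂ ⊓ 𝓟 {z | c ≤ z.re}) (𝓝 0) := by
  refine tendsto_of_subseq_tendsto fun u hu => ?_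
  obtain ⟨hu_cocompact, hu_re⟩ := tendsto_inf.1 hu
  rw [tendsto_principal] at hu_re
  by_cases hre : Tendsto (fun k => (u k).re) atTop atTop
  · exact ⟨id, (tendsto_laplaceIoc_comap_re_atTop hg).comp (tendsto_comap_iff.2 hre)⟩
  obtain ⟨b, hb⟩ : ∃ b, ∃ᶠ k in atTop, ¬b ≤ (u k).re := by
    simpa only [tendsto_atTop, not_forall, not_eventually] using hre
  obtain ⟨x, -, φ, hφ, hx⟩ := tendsto_subseq_of_frequently_bounded (Metric.isBounded_Icc c b)
    (x := fun k => (u k).re)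
    ((hb.and_eventually hu_re).mono fun k hk => ⟨hk.2, (not_le.1 hk.1).le⟩)
  have him := tendsto_im_cocompact_of_tendsto_re (hu_cocompact.comp hφ.tendsto_atTop) hx
  exact ⟨φ, (tendsto_laplaceIoc_comap_re_nhds_inf_comap_im_cocompact hg x).comp
    (tendsto_inf.2 ⟨tendsto_comap_iff.2 hx, tendsto_comap_iff.2 him⟩)⟩

end laplaceIoc

section characteristicMatrix

variable {n : ℕ} (A : Matrix (Fin n) (Fin n) ℂ) (A2 A3 : ℝ → Matrix (Fin n) (Fin n) ℂ)

noncomputable def normalizedDelta (z : ℂ) : Matrix (Fin n) (Fin n) ℂ :=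
  1 - cexp (-z) • A - Matrix.of (fun i j => laplaceIoc (fun s => A2 s i j) z)
    - z⁻¹ • Matrix.of (fun i j => laplaceIoc (fun s => A3 s i j) z)

lemma Delta_eq_neg_smul_normalizedDelta {z : ℂ} (hz : z ≠ 0) :
    Delta A A2 A3 z = (-z) • normalizedDelta A A2 A3 z := by
  ext i j
  simp only [Delta, normalizedDelta, laplaceIoc, Matrix.add_apply, Matrix.sub_apply,
    Matrix.smul_apply, Matrix.of_apply, smul_eq_mul]
  field_simp
  ring

lemma det_Delta_eq {z : ℂ} (hz : z ≠ 0) :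
    (Delta A A2 A3 z).det = (-z) ^ n * (normalizedDelta A A2 A3 z).det := by
  rw [Delta_eq_neg_smul_normalizedDelta A A2 A3 hz, Matrix.det_smul, Fintype.card_fin]

variable {A2 A3} (hA2 : ∀ i j, Integrable (fun s => A2 s i j) μI)
  (hA3 : ∀ i j, Integrable (fun s => A3 s i j) μI)
include hA2 hA3

lemma differentiable_det_Delta : Differentiable ℂ fun z => (Delta A A2 A3 z).det := by
  refine Differentiable.matrix_det fun i j => ?_
  have h2 := differentiable_laplaceIoc (hA2 i j)
  have h3 := differentiable_laplaceIoc (hA3 i j)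
  unfold laplaceIoc at h2 h3
  simp only [Delta, Matrix.add_apply, Matrix.smul_apply, Matrix.of_apply, smul_eq_mul]
  fun_prop

lemma tendsto_normalizedDelta {c : ℝ} {α : Type*} {l : Filter α} {u : α → ℂ}
    (hu : Tendsto u l (cocompact ℂ ⊓ 𝓟 {z | c ≤ z.re})) {w : ℂ}
    (hw : Tendsto (fun a => cexp (-u a)) l (𝓝 w)) :
    Tendsto (fun a => normalizedDelta A A2 A3 (u a)) l (𝓝 (1 - w • A)) := by
  have hL : ∀ B : ℝ → Matrix (Fin n) (Fin n) ℂ, (∀ i j, Integrable (fun s => B s i j) μI) →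
      Tendsto (fun a => Matrix.of fun i j => laplaceIoc (fun s => B s i j) (u a)) l (𝓝 0) :=
    fun B hB => tendsto_pi_nhds.2 fun i => tendsto_pi_nhds.2 fun j =>
      (tendsto_laplaceIoc_cocompact_inf_principal (hB i j) c).comp hu
  have hu_inv : Tendsto (fun a => (u a)⁻¹) l (𝓝 0) := by
    refine tendsto_inv₀_cobounded.comp ?_
    rw [Metric.cobounded_eq_cocompact]
    exact hu.mono_right inf_le_left
  simpa [normalizedDelta] using
    ((tendsto_const_nhds.sub (hw.smul_const A)).sub (hL A2 hA2)).sub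
    (hu_inv.smul (hL A3 hA3))

theorem eventually_det_Delta_ne_zero_s11 {c : ℝ} (hc : ∀ μ ∈ spectrum ℂ A, Real.log ‖μ‖ < c) :
    ∀ᶠ z in cocompact ℂ ⊓ 𝓟 {z | c ≤ z.re}, (Delta A A2 A3 z).det ≠ 0 := by
  by_contra h
  obtain ⟨u, hu, hzero⟩ := exists_seq_forall_of_frequently (not_eventually.1 h)
  have hball : ∀ᶠ k in atTop, cexp (-u k) ∈ Metric.closedBall 0 (Real.exp (-c)) :=
    (tendsto_principal.1 (hu.mono_right inf_le_right)).mono fun k hk => by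
      simpa [norm_exp] using hk
  obtain ⟨w, hw, φ, hφ, hlim⟩ :=
    tendsto_subseq_of_frequently_bounded Metric.isBounded_closedBall hball.frequently
  rw [Metric.isClosed_closedBall.closure_eq, mem_closedBall_zero_iff] at hw
  have huφ := hu.comp hφ.tendsto_atTop
  have hdet := (continuous_id.matrix_det.tendsto _).comp
    (tendsto_normalizedDelta A hA2 hA3 huφ hlim)
  refine det_one_sub_smul_ne_zero hc hw (tendsto_nhds_unique hdet (tendsto_const_nhds.congr' ?_))
  filter_upwards [(huφ.mono_right inf_le_left).eventually_mem
    (isCompact_singleton (x := 0)).compl_mem_cocompact] with k (hk : u (φ k) ≠ 0)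
  have hk0 := hzero (φ k)
  rw [not_not, det_Delta_eq A A2 A3 hk] at hk0
  exact ((mul_eq_zero.1 hk0).resolve_left (pow_ne_zero _ (neg_ne_zero.2 hk))).symm

end characteristicMatrix

theorem finitely_many_zeros_in_right_half_plane_general
    (n : ℕ) (Am1 : Matrix (Fin n) (Fin n) ℂ)
    (A2 A3 : ℝ → Matrix (Fin n) (Fin n) ℂ)
    (hA2 : ∀ i j, MeasureTheory.MemLp (fun θ => A2 θ i j) 2
      (volume.restrict (Set.Ioc (-1:ℝ) 0)))
    (hA3 : ∀ i j, MeasureTheory.MemLp (fun θ => A3 θ i j) 2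
      (volume.restrict (Set.Ioc (-1:ℝ) 0)))
    (c : ℝ) (hc : ∀ μ ∈ spectrum ℂ Am1, Real.log ‖μ‖ < c) :
    {lam : ℂ | (Delta Am1 A2 A3 lam).det = 0 ∧ c ≤ lam.re}.Finite := by
  have hA2' := fun i j => (hA2 i j).integrable one_le_two
  have hA3' := fun i j => (hA3 i j).integrable one_le_two
  have hne := eventually_det_Delta_ne_zero_s11 Am1 hA2' hA3' hc
  obtain ⟨z₀, hz₀⟩ := hne.exists
  obtain ⟨K, hK, hKne⟩ := (hasBasis_cocompact.inf_principal _).eventually_iff.1 hne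
  refine ((differentiable_det_Delta Am1 hA2' hA3').finite_setOf_mem_and_eq_zero hz₀ hK).subset
    fun z ⟨hz, hre⟩ => ⟨?_, hz⟩
  by_contra hzK
  exact hKne ⟨hzK, hre⟩ hz

theorem finitely_many_zeros_in_right_half_plane
    (n : ℕ) (hn : 0 < n) (Am1 : Matrix (Fin n) (Fin n) ℂ)
    (hinv : IsUnit Am1)
    (A2 A3 : ℝ → Matrix (Fin n) (Fin n) ℂ)
    (hA2 : ∀ i j, MeasureTheory.MemLp (fun θ => A2 θ i j) 2
      (volume.restrict (Set.Ioc (-1:ℝ) 0)))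
    (hA3 : ∀ i j, MeasureTheory.MemLp (fun θ => A3 θ i j) 2
      (volume.restrict (Set.Ioc (-1:ℝ) 0)))
    (c : ℝ) (hc : ∀ μ ∈ spectrum ℂ Am1, Real.log ‖μ‖ < c) :
    {lam : ℂ | (Delta Am1 A2 A3 lam).det = 0 ∧ c ≤ lam.re}.Finite :=
  finitely_many_zeros_in_right_half_plane_general n Am1 A2 A3 hA2 hA3 c hc
end
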